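/- arXiv:2308.10733 — 2 statements merged into one kernel-verified Lean document; each statement's English description precedes it below -/
import Mathlib

section
/- Let μ be a locally finite positive Borel measure on ℝ and M_μ the dyadic maximal function M_μ f(x) = sup over dyadic intervals I containing x of (1/μ(I))∫_I |f| dμ. Then for every weight w ≥ 0 and 1 < q < ∞, there is a constant C_q such that ∫ (M_μ f)^q w dμ ≤ C_q ∫ |f|^q (M_μ w) dμ. -/
open MeasureTheory Set
open scoped ENNReal NNReal

/-- The dyadic interval `[k·2ⁿ, (k+1)·2ⁿ)`. -/
def dyadicInterval (n k : ℤ) : Set ℝ :=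
  Set.Ico ((k : ℝ) * 2 ^ n) (((k : ℝ) + 1) * 2 ^ n)

/-- The dyadic maximal function with respect to the measure `μ`:
`M_μ f(x) = sup { μ(I)⁻¹ ∫_I f dμ : I dyadic, x ∈ I }`. -/
noncomputable def dyadicMaximal (μ : Measure ℝ) (f : ℝ → ℝ≥0∞) (x : ℝ) : ℝ≥0∞ :=
  ⨆ (n : ℤ) (k : ℤ) (_ : x ∈ dyadicInterval n k),
    (μ (dyadicInterval n k))⁻¹ * ∫⁻ y in dyadicInterval n k, f y ∂μ

/-!
Write `ν = w · μ`. Selecting the maximal dyadic intervals on which the `μ`-average of `f` exceeds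
`t` (a Calderón–Zygmund decomposition) gives the weak type bound
`t · ν {M f > t} ≤ ∫ f · M w dμ`: on a selected interval `I`,
`t ∫_I w dμ ≤ (⨍_I f) ∫_I w dμ = ∫_I f · ⨍_I w dμ ≤ ∫_I f · M w dμ`.
As `M f ≤ M (f 1_{f > t}) + t`, this sharpens to `t · ν {M f > 2t} ≤ ∫_{f > t} f · M w dμ`,
and summing these bounds over the levels `t = 2^j` against `(2^j)^q` (a discrete Marcinkiewicz
interpolation) gives `∫ (M f)^q dν ≤ 4^q (1 - 2^(1-q))⁻¹ ∫ f^q · M w dμ`.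
-/

open Function

lemma mem_dyadicInterval_iff {n k : ℤ} {x : ℝ} : x ∈ dyadicInterval n k ↔ ⌊x / 2 ^ n⌋ = k := by
  have h2 : (0 : ℝ) < 2 ^ n := zpow_pos two_pos n
  rw [dyadicInterval, mem_Ico, Int.floor_eq_iff, le_div_iff₀ h2, div_lt_iff₀ h2]

lemma measurableSet_dyadicInterval {n k : ℤ} : MeasurableSet (dyadicInterval n k) :=
  measurableSet_Ico

lemma floor_div_two_zpow_eq_of_le {n m : ℤ} (hnm : n ≤ m) {x y : ℝ}
    (h : ⌊x / 2 ^ n⌋ = ⌊y / 2 ^ n⌋) : ⌊x / 2 ^ m⌋ = ⌊y / 2 ^ m⌋ := by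
  have hsplit (z : ℝ) : z / 2 ^ m = z / 2 ^ n / ((2 ^ (m - n).toNat : ℕ) : ℝ) := by
    rw [div_div, Nat.cast_pow, Nat.cast_ofNat, ← zpow_natCast, Int.toNat_of_nonneg (by omega),
      ← zpow_add₀ two_ne_zero, add_sub_cancel]
  rw [hsplit x, hsplit y, Int.floor_div_natCast, Int.floor_div_natCast, h]

noncomputable def dyadicAverage (μ : Measure ℝ) (f : ℝ → ℝ≥0∞) (n : ℤ) (x : ℝ) : ℝ≥0∞ :=
  (μ (dyadicInterval n ⌊x / 2 ^ n⌋))⁻¹ * ∫⁻ y in dyadicInterval n ⌊x / 2 ^ n⌋, f y ∂μ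

section DyadicAverage

variable {μ : Measure ℝ} {f g : ℝ → ℝ≥0∞} {n : ℤ} {x : ℝ}

lemma dyadicMaximal_eq_iSup_dyadicAverage (μ : Measure ℝ) (f : ℝ → ℝ≥0∞) (x : ℝ) :
    dyadicMaximal μ f x = ⨆ n, dyadicAverage μ f n x := by
  simp only [dyadicMaximal, mem_dyadicInterval_iff, iSup_iSup_eq_right, dyadicAverage]

lemma dyadicAverage_eq_of_le {m : ℤ} (hnm : n ≤ m) {y : ℝ} (h : ⌊x / 2 ^ n⌋ = ⌊y / 2 ^ n⌋) :
    dyadicAverage μ f m x = dyadicAverage μ f m y := by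
  rw [dyadicAverage, dyadicAverage, floor_div_two_zpow_eq_of_le hnm h]

lemma measurable_dyadicAverage (μ : Measure ℝ) (f : ℝ → ℝ≥0∞) (n : ℤ) :
    Measurable (dyadicAverage μ f n) :=
  (measurable_of_countable fun k : ℤ =>
    (μ (dyadicInterval n k))⁻¹ * ∫⁻ y in dyadicInterval n k, f y ∂μ).comp
      (measurable_id.div_const _).floor

lemma measurable_dyadicMaximal (μ : Measure ℝ) (f : ℝ → ℝ≥0∞) :
    Measurable (dyadicMaximal μ f) := by
  simp only [funext (dyadicMaximal_eq_iSup_dyadicAverage μ f)]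
  exact .iSup fun n => measurable_dyadicAverage μ f n

lemma dyadicAverage_le_dyadicMaximal : dyadicAverage μ f n x ≤ dyadicMaximal μ f x :=
  (dyadicMaximal_eq_iSup_dyadicAverage μ f x).symm ▸ le_iSup (dyadicAverage μ f · x) n

lemma dyadicMaximal_mono (h : f ≤ g) : dyadicMaximal μ f ≤ dyadicMaximal μ g := fun x => by
  simp only [dyadicMaximal_eq_iSup_dyadicAverage, dyadicAverage]
  gcongr with n
  exact h _

lemma dyadicAverage_add_const_le (c : ℝ≥0∞) :
    dyadicAverage μ (fun y => f y + c) n x ≤ dyadicAverage μ f n x + c := by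
  set I := dyadicInterval n ⌊x / 2 ^ n⌋
  calc (μ I)⁻¹ * ∫⁻ y in I, f y + c ∂μ = (μ I)⁻¹ * ∫⁻ y in I, f y ∂μ + (μ I)⁻¹ * (c * μ I) := by
        rw [lintegral_add_right' _ aemeasurable_const, setLIntegral_const, mul_add]
    _ ≤ dyadicAverage μ f n x + c := by
        rw [mul_comm c, ← mul_assoc]
        exact add_le_add le_rfl (mul_le_of_le_one_left' (ENNReal.inv_mul_le_one _))

lemma dyadicMaximal_add_const_le (c : ℝ≥0∞) :
    dyadicMaximal μ (fun y => f y + c) x ≤ dyadicMaximal μ f x + c := by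
  simp only [dyadicMaximal_eq_iSup_dyadicAverage, ENNReal.iSup_add]
  exact iSup_mono fun n => dyadicAverage_add_const_le c

lemma dyadicMaximal_le_indicator_add (t : ℝ≥0∞) :
    dyadicMaximal μ f x ≤ dyadicMaximal μ ({y | t < f y}.indicator f) x + t := by
  refine le_trans (dyadicMaximal_mono (fun y => ?_) x) (dyadicMaximal_add_const_le t)
  by_cases hy : t < f y
  · simp [indicator_of_mem (show y ∈ {y | t < f y} from hy)]
  · simpa [indicator_of_notMem (show y ∉ {y | t < f y} from hy)] using not_lt.mp hy

end DyadicAverage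

section WeakType

variable {μ : Measure ℝ} {w f : ℝ → ℝ≥0∞} {t : ℝ≥0∞}

lemma mul_setLIntegral_le_of_lt_dyadicAverage {n : ℤ} {x : ℝ} (h : t < dyadicAverage μ f n x) :
    t * ∫⁻ y in dyadicInterval n ⌊x / 2 ^ n⌋, w y ∂μ
      ≤ ∫⁻ y in dyadicInterval n ⌊x / 2 ^ n⌋, f y * dyadicMaximal μ w y ∂μ := by
  set I := dyadicInterval n ⌊x / 2 ^ n⌋
  have hw (y : ℝ) (hy : y ∈ I) : dyadicAverage μ w n x ≤ dyadicMaximal μ w y :=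
    (dyadicAverage_eq_of_le le_rfl (mem_dyadicInterval_iff.mp hy).symm).le.trans
      dyadicAverage_le_dyadicMaximal
  calc t * ∫⁻ y in I, w y ∂μ ≤ dyadicAverage μ f n x * ∫⁻ y in I, w y ∂μ := by gcongr
    _ = (∫⁻ y in I, f y ∂μ) * dyadicAverage μ w n x := by simp only [dyadicAverage, I]; ring
    _ ≤ ∫⁻ y in I, f y * dyadicAverage μ w n x ∂μ := lintegral_mul_const_le _ _
    _ ≤ ∫⁻ y in I, f y * dyadicMaximal μ w y ∂μ :=
        setLIntegral_mono' measurableSet_dyadicInterval fun y hy => by gcongr; exact hw y hy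

lemma mul_measure_le_of_forall_dyadicInterval {ν ρ : Measure ℝ} {n : ℤ} {S : Set ℝ}
    (hS : MeasurableSet S) (hsat : ∀ x ∈ S, ∀ y, ⌊y / 2 ^ n⌋ = ⌊x / 2 ^ n⌋ → y ∈ S)
    (hI : ∀ x ∈ S, t * ν (dyadicInterval n ⌊x / 2 ^ n⌋) ≤ ρ (dyadicInterval n ⌊x / 2 ^ n⌋)) :
    t * ν S ≤ ρ S := by
  have hS_eq : S = ⋃ k, S ∩ dyadicInterval n k := by
    ext x; simp [mem_dyadicInterval_iff]
  have hdisj : Pairwise (Disjoint on fun k => S ∩ dyadicInterval n k) := fun k l hkl =>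
    disjoint_left.mpr fun x hk hl =>
      hkl ((mem_dyadicInterval_iff.mp hk.2).symm.trans (mem_dyadicInterval_iff.mp hl.2))
  have hpiece (k : ℤ) : t * ν (S ∩ dyadicInterval n k) ≤ ρ (S ∩ dyadicInterval n k) := by
    rcases (S ∩ dyadicInterval n k).eq_empty_or_nonempty with hempty | ⟨x, hxS, hxk⟩
    · simp [hempty]
    obtain rfl := mem_dyadicInterval_iff.mp hxk
    rw [inter_eq_right.mpr fun y hy => hsat x hxS y (mem_dyadicInterval_iff.mp hy)]
    exact hI x hxS
  calc t * ν S ≤ t * ∑' k, ν (S ∩ dyadicInterval n k) := by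
        gcongr
        conv_lhs => rw [hS_eq]
        exact measure_iUnion_le _
    _ ≤ ∑' k, ρ (S ∩ dyadicInterval n k) := by
        rw [← ENNReal.tsum_mul_left]; exact ENNReal.tsum_le_tsum hpiece
    _ = ρ S := by
        rw [← measure_iUnion hdisj fun k => hS.inter measurableSet_dyadicInterval, ← hS_eq]

variable (μ f t) in
/-- The generation-`n` intervals of the Calderón–Zygmund decomposition at height `t`, with
generations truncated at `N`. -/
def stoppingSet (N n : ℤ) : Set ℝ :=
  {x | n ≤ N ∧ t < dyadicAverage μ f n x ∧ ∀ m, n < m → m ≤ N → dyadicAverage μ f m x ≤ t}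

lemma measurableSet_stoppingSet (N n : ℤ) : MeasurableSet (stoppingSet μ f t N n) := by
  simp only [stoppingSet, ofPred_and, ofPred_forall]
  exact (MeasurableSet.const _).inter ((measurableSet_lt measurable_const
    (measurable_dyadicAverage μ f n)).inter (.iInter fun m => .iInter fun _ => .iInter fun _ =>
      measurableSet_le (measurable_dyadicAverage μ f m) measurable_const))

lemma mem_stoppingSet_of_floor_eq {N n : ℤ} {x y : ℝ} (hx : x ∈ stoppingSet μ f t N n)
    (hxy : ⌊y / 2 ^ n⌋ = ⌊x / 2 ^ n⌋) : y ∈ stoppingSet μ f t N n := by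
  obtain ⟨hnN, hn, hcoarse⟩ := hx
  refine ⟨hnN, (dyadicAverage_eq_of_le le_rfl hxy).symm ▸ hn, fun m hnm hmN => ?_⟩
  rw [dyadicAverage_eq_of_le hnm.le hxy]
  exact hcoarse m hnm hmN

lemma pairwise_disjoint_stoppingSet (N : ℤ) : Pairwise (Disjoint on stoppingSet μ f t N) := by
  suffices ∀ n m, n < m → Disjoint (stoppingSet μ f t N n) (stoppingSet μ f t N m) from
    fun n m hnm => hnm.lt_or_gt.elim (this n m) fun h => (this m n h).symm
  exact fun n m hnm => disjoint_left.mpr fun x hn hm => (hn.2.2 m hnm hm.1).not_gt hm.2.1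

lemma iUnion_stoppingSet (N : ℤ) :
    ⋃ n, stoppingSet μ f t N n = {x | ∃ n ≤ N, t < dyadicAverage μ f n x} := by
  ext x
  simp only [mem_iUnion, mem_ofPred_eq]
  refine ⟨fun ⟨n, hnN, hn, _⟩ => ⟨n, hnN, hn⟩, fun hex => ?_⟩
  obtain ⟨n, ⟨hnN, hn⟩, hgreatest⟩ := Int.exists_greatest_of_bdd ⟨N, fun m hm => hm.1⟩ hex
  exact ⟨n, hnN, hn, fun m hnm hmN => not_lt.mp fun hm => (hgreatest m ⟨hmN, hm⟩).not_gt hnm⟩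

variable (μ w f t) in
theorem mul_withDensity_lt_dyadicMaximal_le :
    t * μ.withDensity w {x | t < dyadicMaximal μ f x} ≤ ∫⁻ x, f x * dyadicMaximal μ w x ∂μ := by
  set ν := μ.withDensity w
  set ρ := μ.withDensity fun x => f x * dyadicMaximal μ w x
  set E : ℤ → Set ℝ := fun N => {x | ∃ n ≤ N, t < dyadicAverage μ f n x}
  have hE (N : ℤ) : t * ν (E N) ≤ ρ univ := by
    have hS (n : ℤ) : t * ν (stoppingSet μ f t N n) ≤ ρ (stoppingSet μ f t N n) :=
      mul_measure_le_of_forall_dyadicInterval (measurableSet_stoppingSet N n)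
        (fun x hx y => mem_stoppingSet_of_floor_eq hx) fun x hx => by
          rw [withDensity_apply _ measurableSet_dyadicInterval,
            withDensity_apply _ measurableSet_dyadicInterval]
          exact mul_setLIntegral_le_of_lt_dyadicAverage hx.2.1
    have hE_eq : E N = ⋃ n, stoppingSet μ f t N n := (iUnion_stoppingSet N).symm
    calc t * ν (E N) = ∑' n, t * ν (stoppingSet μ f t N n) := by
          rw [hE_eq, measure_iUnion (pairwise_disjoint_stoppingSet N)
            (measurableSet_stoppingSet N), ENNReal.tsum_mul_left]
      _ ≤ ∑' n, ρ (stoppingSet μ f t N n) := ENNReal.tsum_le_tsum hS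
      _ = ρ (E N) := by
          rw [hE_eq, measure_iUnion (pairwise_disjoint_stoppingSet N)
            (measurableSet_stoppingSet N)]
      _ ≤ ρ univ := measure_mono (subset_univ _)
  have hE_mono : Monotone E := fun N N' hNN' x ⟨n, hnN, hn⟩ => ⟨n, hnN.trans hNN', hn⟩
  have hE_union : {x | t < dyadicMaximal μ f x} = ⋃ N, E N := by
    ext x
    simp only [mem_ofPred_eq, mem_iUnion, E, dyadicMaximal_eq_iSup_dyadicAverage, lt_iSup_iff]
    exact ⟨fun ⟨n, hn⟩ => ⟨n, n, le_rfl, hn⟩, fun ⟨_, n, _, hn⟩ => ⟨n, hn⟩⟩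
  calc t * ν {x | t < dyadicMaximal μ f x} = ⨆ N, t * ν (E N) := by
        rw [hE_union, hE_mono.measure_iUnion, ENNReal.mul_iSup]
    _ ≤ ρ univ := iSup_le hE
    _ = ∫⁻ x, f x * dyadicMaximal μ w x ∂μ := by
        rw [withDensity_apply _ MeasurableSet.univ, Measure.restrict_univ]

theorem mul_withDensity_two_mul_lt_dyadicMaximal_le (hf : Measurable f) (t : ℝ≥0∞) :
    t * μ.withDensity w {x | 2 * t < dyadicMaximal μ f x}
      ≤ ∫⁻ x in {x | t < f x}, f x * dyadicMaximal μ w x ∂μ := by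
  set f₁ := {y | t < f y}.indicator f
  have hsub : {x | 2 * t < dyadicMaximal μ f x} ⊆ {x | t < dyadicMaximal μ f₁ x} := by
    intro x hx
    simp only [mem_ofPred_eq] at hx ⊢
    by_contra! h
    have := dyadicMaximal_le_indicator_add (μ := μ) (f := f) (x := x) t
    exact (lt_of_lt_of_le (two_mul t ▸ hx) (this.trans (add_le_add_left h t))).false
  calc t * μ.withDensity w {x | 2 * t < dyadicMaximal μ f x}
      ≤ t * μ.withDensity w {x | t < dyadicMaximal μ f₁ x} := by gcongr
    _ ≤ ∫⁻ x, f₁ x * dyadicMaximal μ w x ∂μ := mul_withDensity_lt_dyadicMaximal_le μ w f₁ t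
    _ = ∫⁻ x in {x | t < f x}, f x * dyadicMaximal μ w x ∂μ := by
        rw [← lintegral_indicator (measurableSet_lt measurable_const hf)]
        simp only [f₁, indicator_mul_left]

end WeakType

lemma ENNReal.two_zpow_add_one (j : ℤ) : (2 : ℝ≥0∞) ^ (j + 1) = 2 * 2 ^ j := by
  rw [ENNReal.zpow_add two_ne_zero ENNReal.ofNat_ne_top, zpow_one, mul_comm]

lemma ENNReal.rpow_eq_rpow_sub_one_mul {q : ℝ} (hq : 1 ≤ q) (t : ℝ≥0∞) :
    t ^ q = t ^ (q - 1) * t := by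
  conv_lhs => rw [← sub_add_cancel q 1]
  rw [ENNReal.rpow_add_of_nonneg _ _ (sub_nonneg.mpr hq) zero_le_one, ENNReal.rpow_one]

lemma rpow_le_tsum_ite_two_zpow_lt {q : ℝ} (hq : 0 < q) (t : ℝ≥0∞) :
    t ^ q ≤ ∑' j : ℤ, if 2 * 2 ^ j < t then (4 * 2 ^ j) ^ q else 0 := by
  rcases eq_or_ne t 0 with rfl | ht0
  · simp [ENNReal.zero_rpow_of_pos hq]
  rcases eq_or_ne t ⊤ with rfl | htop
  · -- every term with `j ≥ 0` is at least `1`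
    refine le_top.trans_eq (eq_top_iff.mpr ?_).symm
    calc ⊤ = ∑' _ : ℕ, (1 : ℝ≥0∞) := (ENNReal.tsum_const_eq_top_of_ne_zero one_ne_zero).symm
      _ ≤ ∑' n : ℕ, if (2 : ℝ≥0∞) * 2 ^ (n : ℤ) < ⊤ then (4 * 2 ^ (n : ℤ)) ^ q else 0 := by
          refine ENNReal.tsum_le_tsum fun n => ?_
          rw [if_pos (ENNReal.mul_lt_top ENNReal.ofNat_lt_top
            (ENNReal.zpow_lt_top two_ne_zero ENNReal.ofNat_ne_top _))]
          refine ENNReal.one_le_rpow (one_le_mul_of_one_le_of_one_le (by norm_num) ?_) hq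
          exact_mod_cast one_le_pow₀ (M₀ := ℝ≥0∞) one_le_two
      _ ≤ _ := ENNReal.tsum_comp_le_tsum_of_injective Nat.cast_injective _
  obtain ⟨J, hJt, htJ⟩ :=
    ENNReal.exists_mem_Ioc_zpow ht0 htop ENNReal.one_lt_two ENNReal.ofNat_ne_top
  have hJ : (2 : ℝ≥0∞) ^ J = 2 * 2 ^ (J - 1) := by rw [← ENNReal.two_zpow_add_one, sub_add_cancel]
  calc t ^ q ≤ (4 * 2 ^ (J - 1)) ^ q := by
        gcongr
        rwa [show (4 : ℝ≥0∞) = 2 * 2 by norm_num, mul_assoc, ← hJ, ← ENNReal.two_zpow_add_one]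
    _ ≤ _ := by
        refine le_of_eq_of_le ?_ (ENNReal.le_tsum (J - 1))
        rw [if_pos (hJ ▸ hJt)]

lemma tsum_ite_le_rpow_two_zpow (q : ℝ) (J : ℤ) :
    ∑' j : ℤ, (if j ≤ J then ((2 : ℝ≥0∞) ^ j) ^ (q - 1) else 0)
      = (1 - 2 ^ (1 - q))⁻¹ * (2 ^ J) ^ (q - 1) := by
  have hterm (n : ℕ) :
      ((2 : ℝ≥0∞) ^ (J - n)) ^ (q - 1) = (2 ^ J) ^ (q - 1) * (2 ^ (1 - q)) ^ n := by
    simp only [← ENNReal.rpow_intCast, ← ENNReal.rpow_natCast, ← ENNReal.rpow_mul,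
      ← ENNReal.rpow_add _ _ two_ne_zero ENNReal.ofNat_ne_top]
    congr 1
    push_cast
    ring
  have hsupp : support (fun j : ℤ => if j ≤ J then ((2 : ℝ≥0∞) ^ j) ^ (q - 1) else 0)
      ⊆ range fun n : ℕ => J - n := fun j hj =>
    ⟨(J - j).toNat, by have : j ≤ J := by_contra fun h => hj (if_neg h); simp only; omega⟩
  rw [← (sub_right_injective.comp Nat.cast_injective).tsum_eq hsupp]
  simp only [comp_apply, sub_le_self_iff, Nat.cast_nonneg, if_true, hterm,
    ENNReal.tsum_mul_left, ENNReal.tsum_geometric, mul_comm]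

lemma tsum_ite_two_zpow_lt_le {q : ℝ} (hq : 1 < q) (t : ℝ≥0∞) :
    ∑' j : ℤ, (if 2 ^ j < t then ((2 : ℝ≥0∞) ^ j) ^ (q - 1) else 0)
      ≤ (1 - 2 ^ (1 - q))⁻¹ * t ^ (q - 1) := by
  rcases eq_or_ne t 0 with rfl | ht0
  · simp
  rcases eq_or_ne t ⊤ with rfl | htop
  · rw [ENNReal.top_rpow_of_pos (sub_pos.mpr hq), ENNReal.mul_top (ENNReal.inv_ne_zero.mpr
      (ENNReal.sub_ne_top ENNReal.one_ne_top))]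
    exact le_top
  obtain ⟨J, hJt, htJ⟩ :=
    ENNReal.exists_mem_Ioc_zpow ht0 htop ENNReal.one_lt_two ENNReal.ofNat_ne_top
  have hle (j : ℤ) (hj : (2 : ℝ≥0∞) ^ j < t) : j ≤ J := by
    by_contra! h
    exact (htJ.trans (ENNReal.zpow_le_of_le one_le_two h)).not_gt hj
  calc ∑' j : ℤ, (if 2 ^ j < t then ((2 : ℝ≥0∞) ^ j) ^ (q - 1) else 0)
      ≤ ∑' j : ℤ, (if j ≤ J then ((2 : ℝ≥0∞) ^ j) ^ (q - 1) else 0) :=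
        ENNReal.tsum_le_tsum fun j => by
          split_ifs with hjt hjJ
          exacts [le_rfl, absurd (hle j hjt) hjJ, zero_le, le_rfl]
    _ ≤ (1 - 2 ^ (1 - q))⁻¹ * t ^ (q - 1) := by
        rw [tsum_ite_le_rpow_two_zpow]
        gcongr

lemma lintegral_rpow_le_tsum_mul_measure {α : Type*} [MeasurableSpace α] {ν : Measure α}
    {F : α → ℝ≥0∞} (hF : Measurable F) {q : ℝ} (hq : 0 < q) :
    ∫⁻ x, F x ^ q ∂ν ≤ ∑' j : ℤ, (4 * 2 ^ j) ^ q * ν {x | 2 * 2 ^ j < F x} := by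
  calc ∫⁻ x, F x ^ q ∂ν
      ≤ ∫⁻ x, ∑' j : ℤ, (if 2 * 2 ^ j < F x then (4 * 2 ^ j) ^ q else 0) ∂ν :=
        lintegral_mono fun x => rpow_le_tsum_ite_two_zpow_lt hq (F x)
    _ = ∑' j : ℤ, (4 * 2 ^ j) ^ q * ν {x | 2 * 2 ^ j < F x} := by
        rw [lintegral_tsum fun j => (Measurable.ite (measurableSet_lt measurable_const hF)
          measurable_const measurable_const).aemeasurable]
        refine tsum_congr fun j => ?_
        rw [← lintegral_indicator_const (measurableSet_lt measurable_const hF)]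
        simp only [indicator_apply, mem_ofPred_eq]

theorem lintegral_rpow_le_of_forall_mul_measure_le {α : Type*} [MeasurableSpace α]
    {μ ν : Measure α} {F g G : α → ℝ≥0∞} (hF : Measurable F) (hg : Measurable g)
    (hG : Measurable G) {q : ℝ} (hq : 1 < q)
    (h : ∀ t, t * ν {x | 2 * t < F x} ≤ ∫⁻ x in {x | t < g x}, G x ∂μ) :
    ∫⁻ x, F x ^ q ∂ν ≤ 4 ^ q * (1 - 2 ^ (1 - q))⁻¹ * ∫⁻ x, g x ^ (q - 1) * G x ∂μ := by
  set c : ℤ → ℝ≥0∞ := fun j => 4 ^ q * ((2 : ℝ≥0∞) ^ j) ^ (q - 1)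
  have hc (j : ℤ) : ((4 : ℝ≥0∞) * 2 ^ j) ^ q = c j * 2 ^ j := by
    rw [ENNReal.mul_rpow_of_nonneg _ _ (by linarith),
      ENNReal.rpow_eq_rpow_sub_one_mul hq.le (2 ^ j), ← mul_assoc]
  have hlevel (j : ℤ) : ∫⁻ x, (if 2 ^ j < g x then c j * G x else 0) ∂μ
      = c j * ∫⁻ x in {x | 2 ^ j < g x}, G x ∂μ := by
    rw [← lintegral_const_mul _ hG, ← lintegral_indicator (measurableSet_lt measurable_const hg)]
    simp only [indicator_apply, mem_ofPred_eq]
  calc ∫⁻ x, F x ^ q ∂ν ≤ ∑' j : ℤ, (4 * 2 ^ j) ^ q * ν {x | 2 * 2 ^ j < F x} :=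
        lintegral_rpow_le_tsum_mul_measure hF (by linarith)
    _ = ∑' j : ℤ, c j * (2 ^ j * ν {x | 2 * 2 ^ j < F x}) := by simp only [hc, mul_assoc]
    _ ≤ ∑' j : ℤ, c j * ∫⁻ x in {x | 2 ^ j < g x}, G x ∂μ :=
        ENNReal.tsum_le_tsum fun j => by gcongr; exact h _
    _ = ∫⁻ x, ∑' j : ℤ, (if 2 ^ j < g x then c j * G x else 0) ∂μ := by
        rw [lintegral_tsum fun j => (Measurable.ite (measurableSet_lt measurable_const hg)
          (hG.const_mul _) measurable_const).aemeasurable]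
        exact tsum_congr fun j => (hlevel j).symm
    _ = ∫⁻ x, 4 ^ q * (∑' j : ℤ, if 2 ^ j < g x then ((2 : ℝ≥0∞) ^ j) ^ (q - 1) else 0)
          * G x ∂μ := by
        refine lintegral_congr fun x => ?_
        rw [← ENNReal.tsum_mul_left, ← ENNReal.tsum_mul_right]
        refine tsum_congr fun j => ?_
        split_ifs <;> simp [c]
    _ ≤ ∫⁻ x, 4 ^ q * ((1 - 2 ^ (1 - q))⁻¹ * g x ^ (q - 1)) * G x ∂μ :=
        lintegral_mono fun x => by gcongr; exact tsum_ite_two_zpow_lt_le hq (g x)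
    _ = 4 ^ q * (1 - 2 ^ (1 - q))⁻¹ * ∫⁻ x, g x ^ (q - 1) * G x ∂μ := by
        rw [← lintegral_const_mul _ (by fun_prop : Measurable fun x => g x ^ (q - 1) * G x)]
        simp only [mul_assoc]

/-- Fefferman–Stein type weighted inequality for the dyadic maximal function: for
`1 < q < ∞` there is a constant `C_q` such that for every locally finite Borel
measure `μ`, every weight `w` and every function `f`,
`∫ (M_μ f)^q w dμ ≤ C_q ∫ |f|^q (M_μ w) dμ`. -/
theorem stmt7 (q : ℝ) (hq : 1 < q) :
    ∃ C : ℝ≥0∞, C ≠ ⊤ ∧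
      ∀ (μ : Measure ℝ), IsLocallyFiniteMeasure μ →
        ∀ (w : ℝ → ℝ≥0∞), Measurable w →
          ∀ (f : ℝ → ℝ), Measurable f →
            ∫⁻ x, (dyadicMaximal μ (fun y => ENNReal.ofReal |f y|) x) ^ q * w x ∂μ
              ≤ C * ∫⁻ x, (ENNReal.ofReal |f x|) ^ q * dyadicMaximal μ w x ∂μ := by
  have hr : (2 : ℝ≥0∞) ^ (1 - q) < 1 :=
    ENNReal.rpow_lt_one_of_one_lt_of_neg ENNReal.one_lt_two (by linarith)
  refine ⟨4 ^ q * (1 - 2 ^ (1 - q))⁻¹, ENNReal.mul_ne_top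
    (ENNReal.rpow_ne_top_of_nonneg (by linarith) ENNReal.ofNat_ne_top)
    (ENNReal.inv_ne_top.mpr (tsub_pos_of_lt hr).ne'), fun μ _ w hw f hf => ?_⟩
  set g : ℝ → ℝ≥0∞ := fun y => ENNReal.ofReal |f y|
  have hg : Measurable g := ENNReal.measurable_ofReal.comp hf.abs
  calc ∫⁻ x, dyadicMaximal μ g x ^ q * w x ∂μ
      = ∫⁻ x, dyadicMaximal μ g x ^ q ∂μ.withDensity w := by
        rw [lintegral_withDensity_eq_lintegral_mul _ hw
          ((measurable_dyadicMaximal μ g).pow_const q)]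
        simp only [Pi.mul_apply, mul_comm]
    _ ≤ 4 ^ q * (1 - 2 ^ (1 - q))⁻¹ * ∫⁻ x, g x ^ (q - 1) * (g x * dyadicMaximal μ w x) ∂μ :=
        lintegral_rpow_le_of_forall_mul_measure_le (measurable_dyadicMaximal μ g) hg
          (hg.mul (measurable_dyadicMaximal μ w)) hq
          fun t => mul_withDensity_two_mul_lt_dyadicMaximal_le hg t
    _ = 4 ^ q * (1 - 2 ^ (1 - q))⁻¹ * ∫⁻ x, g x ^ q * dyadicMaximal μ w x ∂μ := by
        simp only [← mul_assoc, ← ENNReal.rpow_eq_rpow_sub_one_mul hq.le]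
end

section
/- Let J, K be disjoint intervals with 2J ∩ K = ∅ (so K lies outside the double of J), let σ, ω be locally finite positive Borel measures with ω(J_±) > 0. Then the Haar coefficient of the Hilbert transform satisfies the two-sided monotonicity estimate: |⟨H(1_K σ), h_J^ω⟩_ω| ≈ (P(J, 1_K σ)/ℓ(J)) · |⟨Z, h_J^ω⟩_ω|, where Z(x) = x, h_J^ω is the L²(ω)-normalized Haar function of J, P(J,ν) = ∫ ℓ(J)/(ℓ(J)+|y−c_J|)² dν(y), and the implicit constants are absolute. -/
open MeasureTheory Set
open scoped ENNReal

/-- The Poisson integral `P(J,ν) = ∫ ℓ/(ℓ+|t−c|)² dν(t)` of a measure `ν`, for an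
interval with center `c` and length `ℓ`. -/
noncomputable def poissonIntegral (c ℓ : ℝ) (ν : Measure ℝ) : ℝ :=
  ∫ t, ℓ / (ℓ + |t - c|) ^ 2 ∂ν

/-- The `L²(ω)`-normalized Haar function of the dyadic interval indexed by `(n,k)`:
`h_J^ω = (1/√ω(J))·(√(ω(J_−)/ω(J_+))·1_{J_+} − √(ω(J_+)/ω(J_−))·1_{J_−})`. -/
noncomputable def haarFn (ω : Measure ℝ) (n k : ℤ) (x : ℝ) : ℝ :=
  (Real.sqrt (ω (dyadicInterval n k)).toReal)⁻¹ *
    (Real.sqrt ((ω (dyadicInterval (n - 1) (2 * k))).toReal /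
        (ω (dyadicInterval (n - 1) (2 * k + 1))).toReal) *
        (dyadicInterval (n - 1) (2 * k + 1)).indicator (fun _ => (1 : ℝ)) x -
      Real.sqrt ((ω (dyadicInterval (n - 1) (2 * k + 1))).toReal /
        (ω (dyadicInterval (n - 1) (2 * k))).toReal) *
        (dyadicInterval (n - 1) (2 * k)).indicator (fun _ => (1 : ℝ)) x)

/-!
Write `h = h_J^ω`, `ν = 1_K σ`, `c = c_J` and `g(x) = ∫ dν(t) / ((t - x)(t - c))`.
Since `ν` lives outside `2J`, `Hν(x) = Hν(c) + (x - c) g(x)` for `x ∈ J`, and `∫ h dω = 0` gives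
`⟨Hν, h⟩_ω = ∫ g(x) (x - c) h(x) dω(x)` and `⟨Z, h⟩_ω = ∫ (x - c) h(x) dω(x)`. The weight
`(x - c) h(x)` is nonnegative, and on `J` the kernel `1 / ((t - x)(t - c))` lies between
`1 / (ℓ + |t - c|)²` and `8 / (ℓ + |t - c|)²`, so `P(J, ν)/ℓ ≤ g ≤ 8 P(J, ν)/ℓ` on `J`.
-/

open Metric Function

lemma inv_mul_sub_bounds {c x t L : ℝ} (hx : |x - c| ≤ L / 2) (ht : L < |t - c|) :
    ((L + |t - c|) ^ 2)⁻¹ ≤ ((t - x) * (t - c))⁻¹ ∧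
      ((t - x) * (t - c))⁻¹ ≤ 8 * ((L + |t - c|) ^ 2)⁻¹ := by
  set s := |t - c|
  have hL : 0 ≤ L := by linarith [abs_nonneg (x - c)]
  have hs : 0 < s := hL.trans_lt ht
  have hprod : (t - x) * (t - c) = s ^ 2 - (x - c) * (t - c) := by rw [sq_abs]; ring
  have hcross : |(x - c) * (t - c)| ≤ L / 2 * s := by
    rw [abs_mul]; exact mul_le_mul_of_nonneg_right hx (abs_nonneg _)
  obtain ⟨hcross_lo, hcross_hi⟩ := abs_le.1 hcross
  have hlower : s ^ 2 / 2 ≤ (t - x) * (t - c) := by nlinarith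
  have hupper : (t - x) * (t - c) ≤ (L + s) ^ 2 := by nlinarith
  have hpos : 0 < (t - x) * (t - c) := lt_of_lt_of_le (by positivity) hlower
  refine ⟨inv_anti₀ hpos hupper, ?_⟩
  calc ((t - x) * (t - c))⁻¹ ≤ (s ^ 2 / 2)⁻¹ := inv_anti₀ (by positivity) hlower
    _ ≤ ((L + s) ^ 2 / 8)⁻¹ := inv_anti₀ (by positivity) (by nlinarith)
    _ = 8 * ((L + s) ^ 2)⁻¹ := by rw [inv_div, div_eq_mul_inv]

lemma half_lt_abs_sub {c L x t : ℝ} (hx : |x - c| ≤ L / 2) (ht : L < |t - c|) :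
    L / 2 < |t - x| := by
  have := abs_sub_abs_le_abs_sub (t - c) (x - c)
  rw [sub_sub_sub_cancel_right] at this
  linarith

lemma integrable_of_support_subset_isCompact {X E : Type*} [TopologicalSpace X] [T2Space X]
    [MeasurableSpace X] [OpensMeasurableSpace X] [NormedAddCommGroup E] {μ : Measure X}
    [IsFiniteMeasureOnCompacts μ] {s : Set X} (hs : IsCompact s) {f : X → E}
    (hf : AEStronglyMeasurable f μ) (hsupp : support f ⊆ s) {M : ℝ} (hM : ∀ x ∈ s, ‖f x‖ ≤ M) :
    Integrable f μ :=
  (integrableOn_iff_integrable_of_support_subset hsupp).1 <|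
    Measure.integrableOn_of_bounded hs.measure_lt_top.ne hf
      (ae_restrict_of_forall_mem hs.measurableSet hM)

lemma integral_mul_bounds_of_nonneg {α : Type*} [MeasurableSpace α] {μ : Measure α}
    {f φ : α → ℝ} {a b : ℝ} (hφ : Integrable φ μ) (hfφ : Integrable (fun x => f x * φ x) μ)
    (hφ_nonneg : ∀ x, 0 ≤ φ x) (hf : ∀ x ∈ support φ, a ≤ f x ∧ f x ≤ b) :
    a * ∫ x, φ x ∂μ ≤ ∫ x, f x * φ x ∂μ ∧ ∫ x, f x * φ x ∂μ ≤ b * ∫ x, φ x ∂μ := by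
  have hpointwise : ∀ x, a * φ x ≤ f x * φ x ∧ f x * φ x ≤ b * φ x := fun x => by
    by_cases hx : x ∈ support φ
    · exact ⟨mul_le_mul_of_nonneg_right (hf x hx).1 (hφ_nonneg x),
        mul_le_mul_of_nonneg_right (hf x hx).2 (hφ_nonneg x)⟩
    · simp [notMem_support.1 hx]
  rw [← integral_const_mul, ← integral_const_mul]
  exact ⟨integral_mono (hφ.const_mul a) hfφ fun x => (hpointwise x).1,
    integral_mono hfφ (hφ.const_mul b) fun x => (hpointwise x).2⟩

lemma integral_mul_eq_of_integral_eq_zero {α : Type*} [MeasurableSpace α] {μ : Measure α}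
    {F G h : α → ℝ} {a : ℝ} (hh : Integrable h μ) (hh_mean : ∫ x, h x ∂μ = 0)
    (hG : Integrable G μ) (hFG : ∀ x, F x * h x = G x + a * h x) :
    ∫ x, F x * h x ∂μ = ∫ x, G x ∂μ := by
  simp_rw [hFG]
  rw [integral_add hG (hh.const_mul a), integral_const_mul, hh_mean, mul_zero, add_zero]

-- Evaluated only off the support of `ν`, so no principal value is needed.
noncomputable def hilbertTransform (ν : Measure ℝ) (x : ℝ) : ℝ :=
  ∫ t, (t - x)⁻¹ ∂ν

lemma poissonIntegral_div {c L : ℝ} (ν : Measure ℝ) (hL : L ≠ 0) :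
    poissonIntegral c L ν / L = ∫ t, ((L + |t - c|) ^ 2)⁻¹ ∂ν := by
  rw [poissonIntegral, ← integral_div]
  congr 1 with t
  field_simp

lemma poissonIntegral_nonneg {c L : ℝ} (ν : Measure ℝ) (hL : 0 ≤ L) :
    0 ≤ poissonIntegral c L ν :=
  integral_nonneg fun t => by positivity

lemma measurable_integral_inv_mul_sub (ν : Measure ℝ) [SFinite ν] (c : ℝ) :
    Measurable fun x => ∫ t, ((t - x) * (t - c))⁻¹ ∂ν :=
  (StronglyMeasurable.integral_prod_right (f := fun x t => ((t - x) * (t - c))⁻¹)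
    (by fun_prop)).measurable

section HilbertTransform

variable {ν : Measure ℝ} [IsFiniteMeasure ν] {c L x : ℝ}

lemma integrable_poissonKernel (hL : 0 < L) :
    Integrable (fun t => ((L + |t - c|) ^ 2)⁻¹) ν :=
  Integrable.of_bound (by fun_prop) (L ^ 2)⁻¹ <| ae_of_all _ fun t => by
    rw [Real.norm_of_nonneg (by positivity)]
    exact inv_anti₀ (by positivity) (by nlinarith [abs_nonneg (t - c)])

lemma integrable_inv_mul_sub (hL : 0 < L) (hν : ∀ᵐ t ∂ν, L < |t - c|) (hx : |x - c| ≤ L / 2) :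
    Integrable (fun t => ((t - x) * (t - c))⁻¹) ν :=
  ((integrable_poissonKernel hL).const_mul 8).mono' (by fun_prop) <| hν.mono fun t ht => by
    obtain ⟨hlo, hhi⟩ := inv_mul_sub_bounds hx ht
    rwa [Real.norm_of_nonneg ((by positivity : (0 : ℝ) ≤ _).trans hlo)]

lemma integrable_inv_sub (hL : 0 < L) (hν : ∀ᵐ t ∂ν, L < |t - c|) (hx : |x - c| ≤ L / 2) :
    Integrable (fun t => (t - x)⁻¹) ν :=
  Integrable.of_bound (by fun_prop) (L / 2)⁻¹ <| hν.mono fun t ht => by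
    rw [norm_inv, Real.norm_eq_abs]
    exact inv_anti₀ (half_pos hL) (half_lt_abs_sub hx ht).le

lemma hilbertTransform_eq_add (hL : 0 < L) (hν : ∀ᵐ t ∂ν, L < |t - c|) (hx : |x - c| ≤ L / 2) :
    hilbertTransform ν x = hilbertTransform ν c + (x - c) * ∫ t, ((t - x) * (t - c))⁻¹ ∂ν := by
  have hc : |c - c| ≤ L / 2 := by simpa using (half_pos hL).le
  rw [hilbertTransform, hilbertTransform, ← integral_const_mul,
    ← integral_add (integrable_inv_sub hL hν hc) ((integrable_inv_mul_sub hL hν hx).const_mul _)]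
  refine integral_congr_ae (hν.mono fun t ht => ?_)
  have htx : t - x ≠ 0 := abs_pos.1 ((half_pos hL).trans (half_lt_abs_sub hx ht))
  have htc : t - c ≠ 0 := abs_pos.1 (hL.trans ht)
  field_simp
  ring

lemma integral_inv_mul_sub_bounds (hL : 0 < L) (hν : ∀ᵐ t ∂ν, L < |t - c|)
    (hx : |x - c| ≤ L / 2) :
    poissonIntegral c L ν / L ≤ ∫ t, ((t - x) * (t - c))⁻¹ ∂ν ∧
      ∫ t, ((t - x) * (t - c))⁻¹ ∂ν ≤ 8 * (poissonIntegral c L ν / L) := by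
  rw [poissonIntegral_div ν hL.ne', ← integral_const_mul]
  exact ⟨integral_mono_ae (integrable_poissonKernel hL) (integrable_inv_mul_sub hL hν hx)
      (hν.mono fun t ht => (inv_mul_sub_bounds hx ht).1),
    integral_mono_ae (integrable_inv_mul_sub hL hν hx) ((integrable_poissonKernel hL).const_mul 8)
      (hν.mono fun t ht => (inv_mul_sub_bounds hx ht).2)⟩

end HilbertTransform

lemma hilbertTransform_mul_eq {ν : Measure ℝ} [IsFiniteMeasure ν] {c L : ℝ} {h : ℝ → ℝ}
    (hL : 0 < L) (hν : ∀ᵐ t ∂ν, L < |t - c|) (hh_supp : support h ⊆ closedBall c (L / 2))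
    (x : ℝ) :
    hilbertTransform ν x * h x =
      (∫ t, ((t - x) * (t - c))⁻¹ ∂ν) * ((x - c) * h x) + hilbertTransform ν c * h x := by
  by_cases hx : x ∈ closedBall c (L / 2)
  · rw [hilbertTransform_eq_add hL hν (mem_closedBall_iff_norm.1 hx)]
    ring
  · simp [notMem_support.1 fun hx' => hx (hh_supp hx')]

theorem hilbertTransform_pairing_bounds {ν ω : Measure ℝ} [IsFiniteMeasure ν]
    [IsLocallyFiniteMeasure ω] {c L M : ℝ} {h : ℝ → ℝ} (hL : 0 < L)
    (hν : ∀ᵐ t ∂ν, L < |t - c|) (hh_meas : Measurable h) (hh_bdd : ∀ x, |h x| ≤ M)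
    (hh_supp : support h ⊆ closedBall c (L / 2)) (hh_mean : ∫ x, h x ∂ω = 0)
    (hh_sign : ∀ x, 0 ≤ (x - c) * h x) :
    poissonIntegral c L ν / L * |∫ x, x * h x ∂ω| ≤ |∫ x, hilbertTransform ν x * h x ∂ω| ∧
      |∫ x, hilbertTransform ν x * h x ∂ω| ≤
        8 * (poissonIntegral c L ν / L) * |∫ x, x * h x ∂ω| := by
  set P := poissonIntegral c L ν / L
  set g := fun x => ∫ t, ((t - x) * (t - c))⁻¹ ∂ν
  set φ := fun x => (x - c) * h x
  have hP : 0 ≤ P := div_nonneg (poissonIntegral_nonneg ν hL.le) hL.le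
  have hg : ∀ x ∈ closedBall c (L / 2), P ≤ g x ∧ g x ≤ 8 * P := fun x hx =>
    integral_inv_mul_sub_bounds hL hν (mem_closedBall_iff_norm.1 hx)
  have hφ_supp : support φ ⊆ closedBall c (L / 2) := (support_mul_subset_right _ _).trans hh_supp
  have hh_int : Integrable h ω := integrable_of_support_subset_isCompact
    (isCompact_closedBall _ _) hh_meas.aestronglyMeasurable hh_supp fun x _ => hh_bdd x
  have hφ_bdd : ∀ x ∈ closedBall c (L / 2), ‖φ x‖ ≤ L / 2 * M := fun x hx => by
    rw [Real.norm_eq_abs, abs_mul]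
    exact mul_le_mul (mem_closedBall_iff_norm.1 hx) (hh_bdd x) (abs_nonneg _) (half_pos hL).le
  have hφ_int : Integrable φ ω := integrable_of_support_subset_isCompact
    (isCompact_closedBall _ _) (by fun_prop) hφ_supp hφ_bdd
  have hgφ_int : Integrable (fun x => g x * φ x) ω := integrable_of_support_subset_isCompact
    (isCompact_closedBall _ _)
    ((measurable_integral_inv_mul_sub ν c).mul (by fun_prop)).aestronglyMeasurable
    ((support_mul_subset_right _ _).trans hφ_supp) fun x hx => by
      rw [norm_mul, Real.norm_of_nonneg (hP.trans (hg x hx).1)]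
      exact mul_le_mul (hg x hx).2 (hφ_bdd x hx) (norm_nonneg _) (by positivity)
  have hH_pair : ∫ x, hilbertTransform ν x * h x ∂ω = ∫ x, g x * φ x ∂ω :=
    integral_mul_eq_of_integral_eq_zero hh_int hh_mean hgφ_int
      (hilbertTransform_mul_eq hL hν hh_supp)
  have hZ_pair : ∫ x, x * h x ∂ω = ∫ x, φ x ∂ω :=
    integral_mul_eq_of_integral_eq_zero hh_int hh_mean hφ_int fun x => by ring
  obtain ⟨hlo, hhi⟩ := integral_mul_bounds_of_nonneg hφ_int hgφ_int hh_sign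
    fun x hx => hg x (hφ_supp hx)
  have hφ_nonneg : 0 ≤ ∫ x, φ x ∂ω := integral_nonneg hh_sign
  rw [hH_pair, hZ_pair, abs_of_nonneg hφ_nonneg,
    abs_of_nonneg ((mul_nonneg hP hφ_nonneg).trans hlo)]
  exact ⟨hlo, hhi⟩

noncomputable def haarStep (c r a b : ℝ) (x : ℝ) : ℝ :=
  a * (Ico c (c + r)).indicator (fun _ => (1 : ℝ)) x -
    b * (Ico (c - r) c).indicator (fun _ => (1 : ℝ)) x

section HaarStep

variable {c r a b : ℝ}

lemma measurable_haarStep : Measurable (haarStep c r a b) :=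
  ((measurable_const.indicator measurableSet_Ico).const_mul a).sub
    ((measurable_const.indicator measurableSet_Ico).const_mul b)

lemma haarStep_of_mem_right {x : ℝ} (hx : x ∈ Ico c (c + r)) : haarStep c r a b x = a := by
  have : x ∉ Ico (c - r) c := fun h => (not_lt.2 hx.1) h.2
  simp [haarStep, hx, this]

lemma haarStep_of_mem_left {x : ℝ} (hx : x ∈ Ico (c - r) c) : haarStep c r a b x = -b := by
  have : x ∉ Ico c (c + r) := fun h => (not_lt.2 h.1) hx.2
  simp [haarStep, hx, this]

lemma haarStep_of_notMem {x : ℝ} (h₁ : x ∉ Ico c (c + r)) (h₂ : x ∉ Ico (c - r) c) :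
    haarStep c r a b x = 0 := by
  simp [haarStep, h₁, h₂]

lemma abs_haarStep_le (ha : 0 ≤ a) (hb : 0 ≤ b) (x : ℝ) : |haarStep c r a b x| ≤ a + b := by
  by_cases h₁ : x ∈ Ico c (c + r)
  · rw [haarStep_of_mem_right h₁, abs_of_nonneg ha]; linarith
  by_cases h₂ : x ∈ Ico (c - r) c
  · rw [haarStep_of_mem_left h₂, abs_neg, abs_of_nonneg hb]; linarith
  rw [haarStep_of_notMem h₁ h₂, abs_zero]; positivity

lemma sub_mul_haarStep_nonneg (ha : 0 ≤ a) (hb : 0 ≤ b) (x : ℝ) :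
    0 ≤ (x - c) * haarStep c r a b x := by
  by_cases h₁ : x ∈ Ico c (c + r)
  · rw [haarStep_of_mem_right h₁]; exact mul_nonneg (sub_nonneg.2 h₁.1) ha
  by_cases h₂ : x ∈ Ico (c - r) c
  · rw [haarStep_of_mem_left h₂]
    exact mul_nonneg_of_nonpos_of_nonpos (sub_nonpos.2 h₂.2.le) (neg_nonpos.2 hb)
  rw [haarStep_of_notMem h₁ h₂, mul_zero]

lemma support_haarStep_subset : support (haarStep c r a b) ⊆ closedBall c r := by
  intro x hx
  rw [mem_closedBall, Real.dist_eq, abs_le]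
  by_contra hfar
  refine hx (haarStep_of_notMem (fun h => hfar ?_) (fun h => hfar ?_))
  all_goals constructor <;> linarith [h.1, h.2]

lemma integral_haarStep (ω : Measure ℝ) [IsLocallyFiniteMeasure ω] :
    ∫ x, haarStep c r a b x ∂ω = a * ω.real (Ico c (c + r)) - b * ω.real (Ico (c - r) c) := by
  have hint : ∀ s t : ℝ, Integrable ((Ico s t).indicator fun _ => (1 : ℝ)) ω := fun s t =>
    (integrable_indicator_iff measurableSet_Ico).2 (integrableOn_const measure_Ico_lt_top.ne)
  simp only [haarStep]
  rw [integral_sub ((hint _ _).const_mul a) ((hint _ _).const_mul b), integral_const_mul,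
    integral_const_mul, integral_indicator_const _ measurableSet_Ico,
    integral_indicator_const _ measurableSet_Ico, smul_eq_mul, smul_eq_mul, mul_one, mul_one]

end HaarStep

lemma sqrt_div_mul_self_eq {P Q : ℝ} (hQ : 0 ≤ Q) : √(P / Q) * Q = √P * √Q := by
  rw [Real.sqrt_div' P hQ]
  rcases hQ.eq_or_lt with rfl | hQ
  · simp
  rw [div_mul_eq_mul_div, div_eq_iff (Real.sqrt_pos.2 hQ).ne', mul_assoc,
    Real.mul_self_sqrt hQ.le]

lemma dyadicInterval_sub_one_two_mul (n k : ℤ) :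
    dyadicInterval (n - 1) (2 * k) =
      Ico (((k : ℝ) + 1 / 2) * 2 ^ n - 2 ^ n / 2) (((k : ℝ) + 1 / 2) * 2 ^ n) := by
  rw [dyadicInterval, zpow_sub_one₀ two_ne_zero]
  push_cast
  congr 1 <;> ring

lemma dyadicInterval_sub_one_two_mul_add_one (n k : ℤ) :
    dyadicInterval (n - 1) (2 * k + 1) =
      Ico (((k : ℝ) + 1 / 2) * 2 ^ n) (((k : ℝ) + 1 / 2) * 2 ^ n + 2 ^ n / 2) := by
  rw [dyadicInterval, zpow_sub_one₀ two_ne_zero]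
  push_cast
  congr 1 <;> ring

lemma haarFn_eq_haarStep (ω : Measure ℝ) (n k : ℤ) :
    ∃ a b : ℝ, 0 ≤ a ∧ 0 ≤ b ∧
      a * ω.real (Ico (((k : ℝ) + 1 / 2) * 2 ^ n) (((k : ℝ) + 1 / 2) * 2 ^ n + 2 ^ n / 2)) =
        b * ω.real (Ico (((k : ℝ) + 1 / 2) * 2 ^ n - 2 ^ n / 2) (((k : ℝ) + 1 / 2) * 2 ^ n)) ∧
      haarFn ω n k = haarStep (((k : ℝ) + 1 / 2) * 2 ^ n) (2 ^ n / 2) a b := by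
  rw [← dyadicInterval_sub_one_two_mul, ← dyadicInterval_sub_one_two_mul_add_one]
  set s := (√(ω (dyadicInterval n k)).toReal)⁻¹
  set P := ω.real (dyadicInterval (n - 1) (2 * k))
  set Q := ω.real (dyadicInterval (n - 1) (2 * k + 1))
  refine ⟨s * √(P / Q), s * √(Q / P), by positivity, by positivity, ?_, ?_⟩
  · rw [mul_assoc, mul_assoc, sqrt_div_mul_self_eq measureReal_nonneg,
      sqrt_div_mul_self_eq measureReal_nonneg, mul_comm √P]
  · ext x
    rw [haarFn, haarStep, ← dyadicInterval_sub_one_two_mul,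
      ← dyadicInterval_sub_one_two_mul_add_one]
    simp only [measureReal_def, P, Q]
    ring

/-- Monotonicity principle for the Hilbert transform: if `J` (indexed by `(n,k)`,
with center `c_J` and length `ℓ(J) = 2ⁿ`) and `K` (indexed by `(m,j)`) are dyadic
intervals with `K` disjoint from the double `2J`, and both children of `J` have
positive `ω`-measure, then with absolute constants `c, C`,
`c (P(J,1_Kσ)/ℓ(J)) |⟨Z,h_J^ω⟩_ω| ≤ |⟨H(1_Kσ),h_J^ω⟩_ω| ≤ C (P(J,1_Kσ)/ℓ(J)) |⟨Z,h_J^ω⟩_ω|`. -/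
theorem stmt19 :
    ∃ c C : ℝ, 0 < c ∧ 0 < C ∧
      ∀ (σ ω : Measure ℝ), IsLocallyFiniteMeasure σ → IsLocallyFiniteMeasure ω →
        ∀ n k m j : ℤ,
          0 < ω (dyadicInterval (n - 1) (2 * k)) →
          0 < ω (dyadicInterval (n - 1) (2 * k + 1)) →
          Disjoint (dyadicInterval m j)
            (Set.Icc ((((k : ℝ) + 1 / 2) * 2 ^ n) - 2 ^ n)
              ((((k : ℝ) + 1 / 2) * 2 ^ n) + 2 ^ n)) →
          c * (poissonIntegral (((k : ℝ) + 1 / 2) * 2 ^ n) ((2 : ℝ) ^ n)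
                  (σ.restrict (dyadicInterval m j)) / (2 : ℝ) ^ n) *
              |∫ x, x * haarFn ω n k x ∂ω|
            ≤ |∫ x, (∫ t in dyadicInterval m j, (t - x)⁻¹ ∂σ) * haarFn ω n k x ∂ω| ∧
          |∫ x, (∫ t in dyadicInterval m j, (t - x)⁻¹ ∂σ) * haarFn ω n k x ∂ω|
            ≤ C * (poissonIntegral (((k : ℝ) + 1 / 2) * 2 ^ n) ((2 : ℝ) ^ n)
                  (σ.restrict (dyadicInterval m j)) / (2 : ℝ) ^ n) *
                |∫ x, x * haarFn ω n k x ∂ω| := by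
  refine ⟨1, 8, one_pos, by norm_num, fun σ ω _ _ n k m j _ _ hdisj => ?_⟩
  set c := ((k : ℝ) + 1 / 2) * 2 ^ n
  have : IsFiniteMeasure (σ.restrict (dyadicInterval m j)) :=
    isFiniteMeasure_restrict.2 measure_Ico_lt_top.ne
  have hfar : ∀ᵐ t ∂σ.restrict (dyadicInterval m j), (2 : ℝ) ^ n < |t - c| :=
    ae_restrict_of_forall_mem measurableSet_Ico fun t ht => by
      by_contra hnear
      obtain ⟨h₁, h₂⟩ := abs_le.1 (not_lt.1 hnear)
      exact disjoint_left.1 hdisj ht ⟨by linarith, by linarith⟩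
  obtain ⟨a, b, ha, hb, hbalance, hhaar⟩ := haarFn_eq_haarStep ω n k
  rw [hhaar, one_mul]
  exact hilbertTransform_pairing_bounds (by positivity) hfar measurable_haarStep
    (abs_haarStep_le ha hb) support_haarStep_subset
    (by rw [integral_haarStep, hbalance, sub_self]) (sub_mul_haarStep_nonneg ha hb)
end
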